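/- arXiv:math/0005159 — 6 statements merged into one kernel-verified Lean document; each statement's English description precedes it below -/
import Mathlib

section
/- Let C ⊆ B(H) be a C*-algebra acting nondegenerately on H. If the commutant C' is infinite dimensional, then there exists a linear manifold M ⊆ H invariant under C which is not closed. -/
/-!
Suppose every `S`-invariant subspace is closed. The union of an increasing chain of invariant
subspaces is then closed, so by Baire's theorem the chain stabilises; since `S` is self-adjoint,
orthogonal complements turn this into the descending chain condition as well. Hence `H` is a
finite sum of minimal invariant subspaces `Uᵢ`, with projections `Pᵢ` in the commutant `𝔄`.
Schur's lemma (a point of the spectrum of the compression of `b ∈ 𝔄` to `Uᵢ`, together with the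
minimality of `Uᵢ`) gives `Pᵢ 𝔄 Pᵢ = ℂ Pᵢ`, and the C⋆-identity then makes every corner
`Pᵢ 𝔄 Pⱼ` at most one-dimensional. An operator all of whose corners vanish is zero, so `𝔄` embeds
into a finite sum of lines.
-/

theorem Submodule.exists_forall_le_of_isClosed_iSup {𝕜 E : Type*} [NontriviallyNormedField 𝕜]
    [NormedAddCommGroup E] [NormedSpace 𝕜 E] [CompleteSpace E] (f : ℕ →o Submodule 𝕜 E)
    (hf : ∀ n, IsClosed (f n : Set E)) (hsup : IsClosed ((⨆ n, f n : Submodule 𝕜 E) : Set E)) :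
    ∃ n, ∀ m, f m ≤ f n := by
  set M := ⨆ n, f n
  have : CompleteSpace M := hsup.completeSpace_coe
  have hcover : ⋃ n, ((f n).comap M.subtype : Set M) = Set.univ :=
    Set.eq_univ_of_forall fun x => Set.mem_iUnion.2 ((Submodule.mem_iSup_of_chain f x).1 x.2)
  obtain ⟨n, hn⟩ := nonempty_interior_of_iUnion_of_closed
    (fun n => (hf n).preimage continuous_subtype_val) hcover
  have htop := Submodule.eq_top_of_nonempty_interior' ((f n).comap M.subtype) hn
  refine ⟨n, fun m x hx => ?_⟩
  simpa using htop.ge (Submodule.mem_top (x := (⟨x, le_iSup f m hx⟩ : M)))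

theorem ContinuousLinearMap.eq_zero_of_starProjection_mul_mul_starProjection
    {𝕜 E ι : Type*} [RCLike 𝕜] [NormedAddCommGroup E] [InnerProductSpace 𝕜 E]
    (U : ι → Submodule 𝕜 E) [∀ i, (U i).HasOrthogonalProjection] (hU : ⨆ i, U i = ⊤)
    {T : E →L[𝕜] E} (hT : ∀ i j, (U i).starProjection * T * (U j).starProjection = 0) :
    T = 0 := by
  have hker : ∀ j, U j ≤ T.ker := fun j x hx => by
    have hTx : T x ∈ ⨅ i, (U i)ᗮ := Submodule.mem_iInf _ |>.2 fun i =>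
      (U i).starProjection_apply_eq_zero_iff.1 (by
        simpa [(U j).starProjection_eq_self_iff.2 hx] using congr($(hT i j) x))
    rwa [Submodule.iInf_orthogonal, hU, Submodule.top_orthogonal_eq_bot] at hTx
  have htop : (⊤ : Submodule 𝕜 E) ≤ T.ker := hU ▸ iSup_le hker
  ext x
  exact htop (Submodule.mem_top (x := x))

section Corners

variable {K A : Type*} [Field K]

theorem Submodule.finiteDimensional_of_mul_mul_mem_span_singleton [Ring A] [Algebra K A]
    {ι : Type*} [Finite ι] (B : Submodule K A) (p : ι → A)
    (hp : ∀ b ∈ B, (∀ i j, p i * b * p j = 0) → b = 0) (z : ι → ι → A)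
    (hz : ∀ i j, ∀ b ∈ B, p i * b * p j ∈ K ∙ z i j) : FiniteDimensional K B := by
  let Φ : B →ₗ[K] ∀ ij : ι × ι, ↥(K ∙ z ij.1 ij.2) := LinearMap.pi fun ij =>
    ((LinearMap.mulLeft K (p ij.1) ∘ₗ LinearMap.mulRight K (p ij.2)) ∘ₗ B.subtype).codRestrict _
      fun b => by simpa [mul_assoc] using hz ij.1 ij.2 b b.2
  refine FiniteDimensional.of_injective Φ ((injective_iff_map_eq_zero Φ).2 fun b hb => ?_)
  refine Subtype.ext (hp b b.2 fun i j => ?_)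
  simpa [Φ, mul_assoc] using congr(($hb (i, j) : A))

theorem Subalgebra.exists_mul_mul_mem_span_singleton [NormedRing A] [StarRing A] [CStarRing A]
    [Algebra K A] (B : Subalgebra K A) (hB : ∀ b ∈ B, star b ∈ B) {p q : A}
    (hp : IsStarProjection p) (hq : IsStarProjection q) (hpB : p ∈ B) (hqB : q ∈ B)
    (hpp : ∀ b ∈ B, p * b * p ∈ K ∙ p) (hqq : ∀ b ∈ B, q * b * q ∈ K ∙ q) :
    ∃ z : A, ∀ b ∈ B, p * b * q ∈ K ∙ z := by
  have hpp' : ∀ r, p * (p * r) = p * r := fun r => by rw [← mul_assoc, hp.isIdempotentElem.eq]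
  have hqq' : ∀ r, q * (q * r) = q * r := fun r => by rw [← mul_assoc, hq.isIdempotentElem.eq]
  by_cases h : ∀ b ∈ B, p * b * q = 0
  · exact ⟨0, fun b hb => by simp [h b hb]⟩
  push Not at h
  obtain ⟨b₀, hb₀, hx⟩ := h
  set x := p * b₀ * q
  have hx_star : star x = q * star b₀ * p := by
    simp [x, star_mul, hp.isSelfAdjoint.star_eq, hq.isSelfAdjoint.star_eq, mul_assoc]
  obtain ⟨α, hα⟩ : ∃ α : K, α • q = star x * x := by
    obtain ⟨α, hα⟩ :=
      Submodule.mem_span_singleton.1 (hqq _ (mul_mem (mul_mem (hB _ hb₀) hpB) hb₀))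
    refine ⟨α, hα.trans ?_⟩
    rw [hx_star]
    simp only [x, mul_assoc, hpp']
  have hα0 : α ≠ 0 := by
    rintro rfl
    exact hx ((CStarRing.star_mul_self_eq_zero_iff x).1 (by rw [← hα, zero_smul]))
  refine ⟨x, fun b hb => ?_⟩
  obtain ⟨γ, hγ⟩ := Submodule.mem_span_singleton.1
    (hpp _ (mul_mem (mul_mem hb hqB) (hB _ hb₀)))
  refine Submodule.mem_span_singleton.2 ⟨α⁻¹ * γ, ?_⟩
  calc (α⁻¹ * γ) • x = α⁻¹ • ((γ • p) * x) := by
        rw [smul_mul_assoc, mul_smul, show p * x = x by simp only [x, mul_assoc, hpp']]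
    _ = α⁻¹ • (p * b * q * (α • q)) := by
        rw [hγ, hα, hx_star]
        simp only [x, mul_assoc, hqq']
    _ = p * b * q := by
        rw [mul_smul_comm, smul_smul, inv_mul_cancel₀ hα0, one_smul, mul_assoc _ q q,
          hq.isIdempotentElem.eq]

end Corners

section Invariant

variable {𝕜 E : Type*} [RCLike 𝕜] [NormedAddCommGroup E] [InnerProductSpace 𝕜 E]
  {S : Set (E →L[𝕜] E)}

def Submodule.IsInvariant (M : Submodule 𝕜 E) (S : Set (E →L[𝕜] E)) : Prop :=
  ∀ T ∈ S, ∀ x ∈ M, T x ∈ M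

namespace Submodule.IsInvariant

variable {M N : Submodule 𝕜 E}

theorem bot : (⊥ : Submodule 𝕜 E).IsInvariant S := fun T _ x hx => by
  rw [(Submodule.mem_bot 𝕜).1 hx, map_zero]
  exact zero_mem _

theorem inf (hM : M.IsInvariant S) (hN : N.IsInvariant S) : (M ⊓ N).IsInvariant S :=
  fun T hT x hx => ⟨hM T hT x hx.1, hN T hT x hx.2⟩

theorem sup (hM : M.IsInvariant S) (hN : N.IsInvariant S) : (M ⊔ N).IsInvariant S := by
  intro T hT x hx
  obtain ⟨y, hy, z, hz, rfl⟩ := Submodule.mem_sup.1 hx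
  rw [map_add]
  exact Submodule.add_mem_sup (hM T hT y hy) (hN T hT z hz)

theorem iSup {ι : Sort*} {M : ι → Submodule 𝕜 E} (hM : ∀ i, (M i).IsInvariant S) :
    (⨆ i, M i).IsInvariant S := by
  intro T hT x hx
  induction hx using Submodule.iSup_induction' with
  | mem i x hx => exact Submodule.mem_iSup_of_mem i (hM i T hT x hx)
  | zero => rw [map_zero]; exact zero_mem _
  | add x y _ _ hx hy => rw [map_add]; exact add_mem hx hy

theorem orthogonal [CompleteSpace E] (hS : ∀ T ∈ S, star T ∈ S) (hM : M.IsInvariant S) :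
    Mᗮ.IsInvariant S := by
  intro T hT x hx v hv
  rw [← ContinuousLinearMap.adjoint_inner_left]
  exact hx _ (hM _ (hS T hT) v hv)

theorem eq_bot_or_eq_of_minimal {V U : Submodule 𝕜 E} (hV : V.IsInvariant S)
    (hU : Minimal (fun U : Submodule 𝕜 E => U.IsInvariant S ∧ U ≠ ⊥) U) (hVU : V ≤ U) :
    V = ⊥ ∨ V = U :=
  or_iff_not_imp_left.2 fun hV0 => le_antisymm hVU (hU.2 ⟨hV, hV0⟩ hVU)

end Submodule.IsInvariant

variable {T : E →L[𝕜] E}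

theorem isInvariant_range_of_mem_centralizer (hT : T ∈ Subalgebra.centralizer 𝕜 S) :
    T.range.IsInvariant S := by
  rintro C hC _ ⟨x, rfl⟩
  exact ⟨C x, by simpa using congr($(hT C hC) x).symm⟩

theorem isInvariant_ker_of_mem_centralizer (hT : T ∈ Subalgebra.centralizer 𝕜 S) :
    T.ker.IsInvariant S := by
  intro C hC x hx
  simp only [LinearMap.mem_ker, ContinuousLinearMap.coe_coe] at hx ⊢
  simpa [hx] using congr($(hT C hC) x).symm

theorem starProjection_mem_centralizer [CompleteSpace E] (hS : ∀ T ∈ S, star T ∈ S)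
    {U : Submodule 𝕜 E} [U.HasOrthogonalProjection] (hU : U.IsInvariant S) :
    U.starProjection ∈ Subalgebra.centralizer 𝕜 S := by
  intro C hC
  ext x
  have hin : C (U.starProjection x) ∈ U := hU C hC _ (U.starProjection_apply_mem x)
  have hout : C (x - U.starProjection x) ∈ Uᗮ :=
    hU.orthogonal hS C hC _ (U.sub_starProjection_mem_orthogonal x)
  calc C (U.starProjection x)
      = U.starProjection (C (U.starProjection x) + C (x - U.starProjection x)) := by
        rw [map_add, U.starProjection_eq_self_iff.2 hin, U.starProjection_apply_eq_zero_iff.2 hout,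
          add_zero]
    _ = U.starProjection (C x) := by rw [← map_add, add_sub_cancel]

theorem eq_zero_or_bijective_of_mem_centralizer {U : Submodule 𝕜 E} [U.HasOrthogonalProjection]
    (hU : Minimal (fun U : Submodule 𝕜 E => U.IsInvariant S ∧ U ≠ ⊥) U) {c : E →L[𝕜] E}
    (hc : c ∈ Subalgebra.centralizer 𝕜 S) (hcU : ∀ x, c x ∈ U) (hcP : c * U.starProjection = c) :
    c = 0 ∨ Function.Bijective (U.orthogonalProjectionOnto ∘L c ∘L U.subtypeL) := by
  rcases (isInvariant_range_of_mem_centralizer hc).eq_bot_or_eq_of_minimal hU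
    (by rintro _ ⟨x, rfl⟩; exact hcU x) with hR | hR
  · exact .inl (ContinuousLinearMap.coe_injective (LinearMap.range_eq_bot.1 hR))
  rcases ((isInvariant_ker_of_mem_centralizer hc).inf hU.1.1).eq_bot_or_eq_of_minimal hU
    inf_le_right with hK | hK
  · refine .inr ⟨(injective_iff_map_eq_zero _).2 fun u hu => ?_, fun v => ?_⟩
    · have hcu : c u = 0 := by
        rw [← U.starProjection_eq_self_iff.2 (hcU u)]
        simpa using congr(($hu : E))
      have hu' : (u : E) ∈ c.ker ⊓ U := ⟨hcu, u.2⟩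
      rw [hK] at hu'
      exact Subtype.ext ((Submodule.mem_bot 𝕜).1 hu')
    · obtain ⟨x, hx⟩ : (v : E) ∈ c.range := hR.ge v.2
      refine ⟨⟨U.starProjection x, U.starProjection_apply_mem x⟩, Subtype.ext ?_⟩
      have hcx : c (U.starProjection x) = v := congr($hcP x).trans hx
      simp [hcx]
  · refine .inl (ContinuousLinearMap.ext fun x => ?_)
    rw [← hcP]
    exact (hK.ge (U.starProjection_apply_mem x)).1

section ChainConditions

variable [CompleteSpace E]

theorem wellFoundedGT_isInvariant
    (hW : ∀ M : Submodule 𝕜 E, M.IsInvariant S → IsClosed (M : Set E)) :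
    WellFoundedGT {M : Submodule 𝕜 E // M.IsInvariant S} := by
  refine wellFoundedGT_iff_monotone_chain_condition.2 fun a => ?_
  obtain ⟨n, hn⟩ := Submodule.exists_forall_le_of_isClosed_iSup ((OrderHom.Subtype.val _).comp a)
    (fun n => hW _ (a n).2) (hW _ (Submodule.IsInvariant.iSup fun n => (a n).2))
  exact ⟨n, fun m hnm => le_antisymm (a.mono hnm) (hn m)⟩

theorem wellFoundedLT_isInvariant (hS : ∀ T ∈ S, star T ∈ S)
    (hW : ∀ M : Submodule 𝕜 E, M.IsInvariant S → IsClosed (M : Set E)) :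
    WellFoundedLT {M : Submodule 𝕜 E // M.IsInvariant S} := by
  have := wellFoundedGT_isInvariant hW
  let perp (M : {M : Submodule 𝕜 E // M.IsInvariant S}) : {M : Submodule 𝕜 E // M.IsInvariant S} :=
    ⟨M.1ᗮ, M.2.orthogonal hS⟩
  refine StrictAnti.wellFoundedLT (f := perp) fun M N hMN => ?_
  have : CompleteSpace M.1 := (hW _ M.2).completeSpace_coe
  have : CompleteSpace N.1 := (hW _ N.2).completeSpace_coe
  refine lt_of_le_of_ne (Submodule.orthogonal_le hMN.le) fun h => hMN.ne (Subtype.ext ?_)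
  rw [← M.1.orthogonal_orthogonal, ← N.1.orthogonal_orthogonal]
  exact congr($(congr(Subtype.val $h))ᗮ).symm

theorem exists_minimal_isInvariant_le (hS : ∀ T ∈ S, star T ∈ S)
    (hW : ∀ M : Submodule 𝕜 E, M.IsInvariant S → IsClosed (M : Set E))
    {V : Submodule 𝕜 E} (hV : V.IsInvariant S) (hV0 : V ≠ ⊥) :
    ∃ U ≤ V, Minimal (fun U : Submodule 𝕜 E => U.IsInvariant S ∧ U ≠ ⊥) U := by
  have := wellFoundedLT_isInvariant hS hW
  obtain ⟨U, hUV, hU⟩ := exists_minimal_le_of_wellFoundedLT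
    (fun U : {M : Submodule 𝕜 E // M.IsInvariant S} => U.1 ≠ ⊥) ⟨V, hV⟩ hV0
  exact ⟨U.1, hUV, ⟨U.2, hU.1⟩, fun W hW hWU => hU.2 (y := ⟨W, hW.1⟩) hW.2 hWU⟩

theorem exists_finite_minimal_isInvariant_sSup_eq_top (hS : ∀ T ∈ S, star T ∈ S)
    (hW : ∀ M : Submodule 𝕜 E, M.IsInvariant S → IsClosed (M : Set E)) :
    ∃ s : Set (Submodule 𝕜 E), s.Finite ∧
      (∀ U ∈ s, Minimal (fun U : Submodule 𝕜 E => U.IsInvariant S ∧ U ≠ ⊥) U) ∧ sSup s = ⊤ := by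
  have := wellFoundedGT_isInvariant hW
  -- If a maximal finite sum `M` of minimal invariant subspaces were not `⊤`, a minimal invariant
  -- subspace of `Mᗮ` would enlarge it.
  obtain ⟨M, ⟨s, hs, hsmin, hsM⟩, hM⟩ := exists_maximal_of_wellFoundedGT
    (fun M : {M : Submodule 𝕜 E // M.IsInvariant S} => ∃ s : Set (Submodule 𝕜 E), s.Finite ∧
      (∀ U ∈ s, Minimal (fun U : Submodule 𝕜 E => U.IsInvariant S ∧ U ≠ ⊥) U) ∧ sSup s = M.1)
    ⟨⟨⊥, .bot⟩, ∅, Set.finite_empty, by simp, sSup_empty⟩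
  refine ⟨s, hs, hsmin, hsM.trans ?_⟩
  by_contra hMtop
  have : CompleteSpace M.1 := (hW _ M.2).completeSpace_coe
  obtain ⟨U, hUM, hU⟩ := exists_minimal_isInvariant_le hS hW (M.2.orthogonal hS)
    (mt Submodule.orthogonal_eq_bot_iff.1 hMtop)
  have hUM' : U ⊔ M.1 ≤ M.1 := hM (y := ⟨U ⊔ M.1, hU.1.1.sup M.2⟩)
    ⟨insert U s, hs.insert U, Set.forall_mem_insert.2 ⟨hU, hsmin⟩, by rw [sSup_insert, hsM]⟩
    (show M.1 ≤ U ⊔ M.1 from le_sup_right)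
  refine hU.1.2 (eq_bot_iff.2 ?_)
  rw [← M.1.inf_orthogonal_eq_bot]
  exact le_inf (le_sup_left.trans hUM') hUM

end ChainConditions

end Invariant

section Complex

variable {E : Type*} [NormedAddCommGroup E] [InnerProductSpace ℂ E] [CompleteSpace E]
  {S : Set (E →L[ℂ] E)}

theorem starProjection_mul_mul_starProjection_mem_span_singleton (hS : ∀ T ∈ S, star T ∈ S)
    {U : Submodule ℂ E} [CompleteSpace U]
    (hU : Minimal (fun U : Submodule ℂ E => U.IsInvariant S ∧ U ≠ ⊥) U)
    {b : E →L[ℂ] E} (hb : b ∈ Subalgebra.centralizer ℂ S) :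
    U.starProjection * b * U.starProjection ∈ ℂ ∙ U.starProjection := by
  have : Nontrivial U := Submodule.nontrivial_iff_ne_bot.2 hU.1.2
  have hP := starProjection_mem_centralizer hS hU.1.1
  set bU : U →L[ℂ] U := U.orthogonalProjectionOnto ∘L b ∘L U.subtypeL
  obtain ⟨μ, hμ⟩ := spectrum.nonempty bU
  set c := μ • U.starProjection - U.starProjection * b * U.starProjection
  suffices c = 0 from Submodule.mem_span_singleton.2 ⟨μ, sub_eq_zero.1 this⟩
  have hcU : U.orthogonalProjectionOnto ∘L c ∘L U.subtypeL = algebraMap ℂ (U →L[ℂ] U) μ - bU := by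
    ext u
    have hu : U.starProjection u = u := U.starProjection_eq_self_iff.2 u.2
    simp [c, bU, hu, U.starProjection_eq_self_iff.2 (U.starProjection_apply_mem _),
      Algebra.algebraMap_eq_smul_one]
  refine (eq_zero_or_bijective_of_mem_centralizer hU (S := S) ?_ ?_ ?_).resolve_right fun h =>
    spectrum.mem_iff.1 hμ (ContinuousLinearMap.isUnit_iff_bijective.2 (hcU ▸ h))
  · exact sub_mem (Subalgebra.smul_mem _ hP μ) (mul_mem (mul_mem hP hb) hP)
  · intro x
    exact sub_mem (U.smul_mem μ (U.starProjection_apply_mem x)) (U.starProjection_apply_mem _)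
  · simp only [c, sub_mul, smul_mul_assoc, mul_assoc, U.isIdempotentElem_starProjection.eq]

theorem finiteDimensional_centralizer_of_forall_isClosed (hS : ∀ T ∈ S, star T ∈ S)
    (hW : ∀ M : Submodule ℂ E, M.IsInvariant S → IsClosed (M : Set E)) :
    FiniteDimensional ℂ (Subalgebra.centralizer ℂ S) := by
  obtain ⟨s, hs, hmin, htop⟩ := exists_finite_minimal_isInvariant_sSup_eq_top hS hW
  have := hs.to_subtype
  have (U : s) : CompleteSpace (U : Submodule ℂ E) := (hW _ (hmin U U.2).1.1).completeSpace_coe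
  have hP (U : s) := starProjection_mem_centralizer hS (hmin U U.2).1.1
  have hcorner (U : s) (b) (hb : b ∈ Subalgebra.centralizer ℂ S) :=
    starProjection_mul_mul_starProjection_mem_span_singleton hS (hmin U U.2) hb
  choose z hz using fun U V : s => (Subalgebra.centralizer ℂ S).exists_mul_mul_mem_span_singleton
    (fun _ => Set.star_mem_centralizer' hS) isStarProjection_starProjection
    isStarProjection_starProjection (hP U) (hP V) (hcorner U) (hcorner V)
  refine Subalgebra.finiteDimensional_toSubmodule.1
    ((Subalgebra.toSubmodule _).finiteDimensional_of_mul_mul_mem_span_singleton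
      (fun U : s => (U : Submodule ℂ E).starProjection) (fun b _ hb => ?_) z hz)
  exact ContinuousLinearMap.eq_zero_of_starProjection_mul_mul_starProjection _
    (by rwa [← sSup_eq_iSup']) hb

end Complex

theorem stmt5_general {H : Type*} [NormedAddCommGroup H] [InnerProductSpace ℂ H] [CompleteSpace H]
    (S : StarSubalgebra ℂ (H →L[ℂ] H))
    (hinf : ¬ FiniteDimensional ℂ (Subalgebra.centralizer ℂ (S : Set (H →L[ℂ] H)))) :
    ∃ M : Submodule ℂ H, (∀ T ∈ S, ∀ x ∈ M, T x ∈ M) ∧ ¬ IsClosed (M : Set H) := by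
  by_contra! hW
  exact hinf (finiteDimensional_centralizer_of_forall_isClosed (fun _ => star_mem) hW)

/-- if a C*-algebra `S ⊆ B(H)` acts nondegenerately and its commutant is
infinite dimensional, then there is a non-closed `S`-invariant linear manifold in `H`. -/
theorem stmt5 {H : Type*} [NormedAddCommGroup H] [InnerProductSpace ℂ H] [CompleteSpace H]
    (S : StarSubalgebra ℂ (H →L[ℂ] H)) (hSclosed : IsClosed (S : Set (H →L[ℂ] H)))
    (hnondeg : ∀ x : H, (∀ T ∈ S, T x = 0) → x = 0)
    (hinf : ¬ FiniteDimensional ℂ (Subalgebra.centralizer ℂ (S : Set (H →L[ℂ] H)))) :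
    ∃ M : Submodule ℂ H, (∀ T ∈ S, ∀ x ∈ M, T x ∈ M) ∧ ¬ IsClosed (M : Set H) :=
  stmt5_general S hinf
end

section
/- Let L be a commutative lattice of orthogonal projections on H containing 0 and I, let A be an atom of L, let x be a nonzero vector in the range of A, and let y be a vector in the range of E(A), the smallest projection of L dominating A. Then the rank-one operator T = ‖x‖⁻² (y ⊗ x*) (sending z to ⟨z,x⟩‖x‖⁻² y) satisfies: T leaves every projection in L invariant, Tx = y, and TA = T. -/
/-! For `P ∈ L`, the product `P A` is again an interval projection of `L` lying under the atom `A`,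
so `P A = 0` or `P A = A`. In the first case `P x = P A x = 0`, hence `T P = 0`; in the second
`P` dominates `A`, hence `E`, so `P y = y` and `(1 - P) T = 0`. -/

noncomputable section

open scoped InnerProductSpace

variable {H : Type*} [NormedAddCommGroup H] [InnerProductSpace ℂ H] [CompleteSpace H]

/-- `P` is an orthogonal projection on `H`. -/
def IsOrthProj (P : H →L[ℂ] H) : Prop := IsSelfAdjoint P ∧ P ∘L P = P

/-- The usual order on orthogonal projections: `P ≤ Q` iff `Q P = P` (range containment). -/
def pLE (P Q : H →L[ℂ] H) : Prop := Q ∘L P = P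

/-- An atom of the lattice `L`: a nonzero interval projection `E - F` (`E, F ∈ L`, `F ≤ E`)
containing no interval projection other than `0` and itself. -/
def IsAtomOf (L : Set (H →L[ℂ] H)) (A : H →L[ℂ] H) : Prop :=
  A ≠ 0 ∧ (∃ E ∈ L, ∃ F ∈ L, pLE F E ∧ A = E - F) ∧
    ∀ E ∈ L, ∀ F ∈ L, pLE F E → pLE (E - F) A → E - F = 0 ∨ E - F = A

/-- `L` is a commutative subspace lattice (CSL): a strongly closed complete lattice of
mutually commuting orthogonal projections containing `0` and `I`.  Completeness is expressed
by the existence, for every subset, of a member of `L` realizing the honest infimum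
(intersection of ranges) and the honest supremum (closed span of ranges). -/
def IsCSL (L : Set (H →L[ℂ] H)) : Prop :=
  (∀ P ∈ L, IsOrthProj P) ∧
  (∀ P ∈ L, ∀ Q ∈ L, P ∘L Q = Q ∘L P) ∧
  (0 : H →L[ℂ] H) ∈ L ∧ (1 : H →L[ℂ] H) ∈ L ∧
  (∀ S ⊆ L, ∃ P ∈ L, (∀ Q ∈ S, pLE P Q) ∧
      LinearMap.range (P : H →ₗ[ℂ] H) = ⨅ Q ∈ S, LinearMap.range (Q : H →ₗ[ℂ] H)) ∧
  (∀ S ⊆ L, ∃ P ∈ L, (∀ Q ∈ S, pLE Q P) ∧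
      LinearMap.range (P : H →ₗ[ℂ] H) = (⨆ Q ∈ S, LinearMap.range (Q : H →ₗ[ℂ] H)).topologicalClosure)

/-- `Alg L`: the algebra of operators leaving every projection of `L` invariant. -/
def AlgL (L : Set (H →L[ℂ] H)) : Set (H →L[ℂ] H) :=
  {T | ∀ P ∈ L, (1 - P) ∘L (T ∘L P) = 0}

/-- The (not necessarily closed) orbit `{Alg L · x}` of a vector `x`. -/
def orbit (L : Set (H →L[ℂ] H)) (x : H) : Set H :=
  {y | ∃ T ∈ AlgL L, T x = y}

/-- `P` is hyperatomic in `L`: `P = E(A₁, …, Aₖ)`, the smallest projection of `L`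
dominating finitely many atoms `A₁, …, Aₖ` of `L`. -/
def HyperatomicIn (L : Set (H →L[ℂ] H)) (P : H →L[ℂ] H) : Prop :=
  ∃ (k : ℕ) (A : Fin k → H →L[ℂ] H), (∀ j, IsAtomOf L (A j)) ∧
    (∀ j, pLE (A j) P) ∧ ∀ F ∈ L, (∀ j, pLE (A j) F) → pLE P F

theorem LinearMap.IsIdempotentElem.range_mul_of_commute {R M : Type*} [Semiring R]
    [AddCommGroup M] [Module R M] {p q : Module.End R M} (hp : IsIdempotentElem p)
    (hq : IsIdempotentElem q) (hpq : Commute p q) :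
    LinearMap.range (p * q) = LinearMap.range p ⊓ LinearMap.range q := by
  ext v
  rw [Submodule.mem_inf, mem_range_iff (IsIdempotentElem.mul_of_commute hpq hp hq),
    mem_range_iff hp, mem_range_iff hq, Module.End.mul_apply]
  constructor
  · intro h
    have hqv : q v = v := by rw [← h, ← Module.End.mul_apply q, ← hpq.eq, Module.End.mul_apply,
      ← Module.End.mul_apply q q, hq.eq, h]
    exact ⟨by rwa [hqv] at h, hqv⟩
  · rintro ⟨hpv, hqv⟩
    rw [hqv, hpv]

theorem IsOrthProj.isStarProjection {P : H →L[ℂ] H} (hP : IsOrthProj P) : IsStarProjection P :=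
  ⟨hP.2, hP.1⟩

namespace IsCSL

variable {L : Set (H →L[ℂ] H)} {P Q : H →L[ℂ] H}

theorem isStarProjection (hL : IsCSL L) (hP : P ∈ L) : IsStarProjection P :=
  (hL.1 P hP).isStarProjection

theorem commute (hL : IsCSL L) (hP : P ∈ L) (hQ : Q ∈ L) : Commute P Q :=
  hL.2.1 P hP Q hQ

theorem mul_mem (hL : IsCSL L) (hP : P ∈ L) (hQ : Q ∈ L) : P * Q ∈ L := by
  -- `L` contains a projection onto `range P ⊓ range Q`; star projections are determined by ranges.
  obtain ⟨M, hML, -, hM⟩ := hL.2.2.2.2.1 {P, Q} (Set.pair_subset hP hQ)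
  rw [iInf_pair] at hM
  have hPQ := (hL.isStarProjection hP).mul (hL.isStarProjection hQ) (hL.commute hP hQ)
  suffices P * Q = M from this ▸ hML
  refine ContinuousLinearMap.IsStarProjection.ext hPQ (hL.isStarProjection hML) ?_
  have hPQrange := LinearMap.IsIdempotentElem.range_mul_of_commute
    ((hL.isStarProjection hP).isIdempotentElem.map ContinuousLinearMap.toLinearMapRingHom)
    ((hL.isStarProjection hQ).isIdempotentElem.map ContinuousLinearMap.toLinearMapRingHom)
    ((hL.commute hP hQ).map ContinuousLinearMap.toLinearMapRingHom)
  rw [← map_mul] at hPQrange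
  rw [hM]
  exact hPQrange

end IsCSL

namespace IsAtomOf

variable {L : Set (H →L[ℂ] H)} {A P : H →L[ℂ] H}

theorem isStarProjection (hA : IsAtomOf L A) (hL : IsCSL L) : IsStarProjection A := by
  obtain ⟨-, ⟨E, hE, F, hF, hFE, rfl⟩, -⟩ := hA
  exact (hL.isStarProjection hF).sub_of_mul_eq_right (hL.isStarProjection hE) hFE

theorem commute (hA : IsAtomOf L A) (hL : IsCSL L) (hP : P ∈ L) : Commute P A := by
  obtain ⟨-, ⟨E, hE, F, hF, -, rfl⟩, -⟩ := hA
  exact (hL.commute hP hE).sub_right (hL.commute hP hF)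

theorem mul_eq_zero_or_eq (hA : IsAtomOf L A) (hL : IsCSL L) (hP : P ∈ L) :
    P * A = 0 ∨ P * A = A := by
  have hAA := (hA.isStarProjection hL).isIdempotentElem.eq
  have hPA := hA.commute hL hP
  obtain ⟨-, ⟨E, hE, F, hF, hFE, rfl⟩, hmin⟩ := hA
  have hPF_le_PE : pLE (P * F) (P * E) := by
    change P * E * (P * F) = P * F
    rw [((hL.commute hP hE).symm).mul_mul_mul_comm, (hL.isStarProjection hP).isIdempotentElem.eq]
    exact congrArg (P * ·) hFE
  have hPA_le_A : pLE (P * E - P * F) (E - F) := by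
    change (E - F) * (P * E - P * F) = P * E - P * F
    rw [← mul_sub, ← mul_assoc, ← hPA.eq, mul_assoc, hAA]
  rw [mul_sub]
  exact hmin _ (hL.mul_mem hP hE) _ (hL.mul_mem hP hF) hPF_le_PE hPA_le_A

end IsAtomOf

section RankOne

open InnerProductSpace ContinuousLinearMap

theorem smul_rankOne_mem_algL {L : Set (H →L[ℂ] H)} (hL : ∀ P ∈ L, IsSelfAdjoint P) {x y : H}
    (h : ∀ P ∈ L, P x = 0 ∨ P y = y) (c : ℂ) : c • rankOne ℂ y x ∈ AlgL L := by
  intro P hP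
  rcases h P hP with hPx | hPy
  · rw [smul_comp, rankOne_comp, (hL P hP).adjoint_eq, hPx, map_zero, smul_zero, comp_zero]
  · rw [← comp_assoc, comp_smul, comp_rankOne, sub_apply, one_apply_eq_self, hPy, sub_self,
      map_zero, zero_apply, smul_zero, zero_comp]

end RankOne

theorem stmt6_general (L : Set (H →L[ℂ] H)) (hL : IsCSL L)
    (A : H →L[ℂ] H) (hA : IsAtomOf L A)
    (x : H) (hx : A x = x) (hx0 : x ≠ 0)
    (E : H →L[ℂ] H)
    (hEmin : ∀ F ∈ L, pLE A F → pLE E F)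
    (y : H) (hy : E y = y) :
    ∀ T : H →L[ℂ] H, T = (((‖x‖ : ℂ) ^ 2)⁻¹) • ((innerSL ℂ x).smulRight y) →
      (∀ P ∈ L, (1 - P) ∘L (T ∘L P) = 0) ∧ T x = y ∧ T ∘L A = T := by
  rintro T rfl
  rw [← InnerProductSpace.rankOne_def]
  have hx_or_hy : ∀ P ∈ L, P x = 0 ∨ P y = y := by
    intro P hP
    rcases hA.mul_eq_zero_or_eq hL hP with hPA | hPA
    · left
      simpa [hx] using congr($hPA x)
    · right
      simpa [hy] using congr($(hEmin P hP hPA) y)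
  refine ⟨smul_rankOne_mem_algL (fun P hP ↦ (hL.isStarProjection hP).isSelfAdjoint) hx_or_hy _,
    ?_, ?_⟩
  · simp [inner_self_eq_norm_sq_to_K, hx0]
  · rw [ContinuousLinearMap.smul_comp, InnerProductSpace.rankOne_comp,
      (hA.isStarProjection hL).isSelfAdjoint.adjoint_eq, hx]

/-- the rank-one lemma.  For an atom `A` of a CSL `L`, a nonzero `x` in the
range of `A` and `y` in the range of `E(A)` (the smallest projection of `L` dominating `A`),
the rank-one operator `T = ‖x‖⁻² (y ⊗ x*)` lies in `Alg L`, `T x = y` and `T A = T`. -/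
theorem stmt6 (L : Set (H →L[ℂ] H)) (hL : IsCSL L)
    (A : H →L[ℂ] H) (hA : IsAtomOf L A)
    (x : H) (hx : A x = x) (hx0 : x ≠ 0)
    (E : H →L[ℂ] H) (hEL : E ∈ L) (hAE : pLE A E)
    (hEmin : ∀ F ∈ L, pLE A F → pLE E F)
    (y : H) (hy : E y = y) :
    ∀ T : H →L[ℂ] H, T = (((‖x‖ : ℂ) ^ 2)⁻¹) • ((innerSL ℂ x).smulRight y) →
      (∀ P ∈ L, (1 - P) ∘L (T ∘L P) = 0) ∧ T x = y ∧ T ∘L A = T :=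
  stmt6_general L hL A hA x hx hx0 E hEmin y hy
end
end

section
/- Let L be a CSL on H, let x₁, x₂ ∈ H be closed vectors for Alg L, let P₁ be the projection onto {Alg L · x₁} (which lies in L), and set x = x₁ + (1-P₁)x₂. Then {Alg L · x} = {Alg L · x₁} ∨ {Alg L · x₂}, i.e., the orbit of x equals the closed span of the orbits of x₁ and x₂, and this span equals the orbit (is singly generated). -/
noncomputable section

open scoped InnerProductSpace

variable {H : Type*} [NormedAddCommGroup H] [InnerProductSpace ℂ H] [CompleteSpace H]

/-! Since `P₁ ∈ L ⊆ Alg L` and `x₁ ∈ ran P₁`, the vector `x = x₁ + (1 - P₁) x₂` recovers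
`x₁ = P₁ x` and `(1 - P₁) x₂ = (1 - P₁) x`; moreover `P₁ x₂ ∈ ran P₁ = Alg L · x₁`. Hence
`x₁, x₂ ∈ Alg L · x`, so both orbits lie in the orbit of `x`, while conversely
`T x = T x₁ + T (1 - P₁) x₂`. The sum of the two orbits is `ran P₁ + ran P₂`, the range of the
idempotent `P₁ + P₂ - P₁ P₂` (as `P₁` and `P₂` commute), hence closed. -/

open scoped Pointwise

theorem LinearMap.range_add_sub_mul_of_commute {R M : Type*} [Ring R] [AddCommGroup M]
    [Module R M] {p q : Module.End R M} (hpq : Commute p q) (hp : IsIdempotentElem p)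
    (hq : IsIdempotentElem q) : range (p + q - p * q) = range p ⊔ range q := by
  apply le_antisymm
  · rintro _ ⟨z, rfl⟩
    have hz : (p + q - p * q) z = p (z - q z) + q z := by
      simp only [sub_apply, add_apply, Module.End.mul_apply, map_sub]
      abel
    rw [hz]
    exact Submodule.add_mem_sup (mem_range_self p _) (mem_range_self q _)
  · have hrp : (p + q - p * q) * p = p := by
      rw [sub_mul, add_mul, hp.eq, mul_assoc, ← hpq.eq, ← mul_assoc, hp.eq, hpq.eq,
        add_sub_cancel_right]
    have hrq : (p + q - p * q) * q = q := by
      rw [sub_mul, add_mul, hq.eq, mul_assoc, hq.eq, add_sub_cancel_left]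
    refine sup_le ?_ ?_
    · conv_lhs => rw [← hrp]
      exact range_comp_le_range _ _
    · conv_lhs => rw [← hrq]
      exact range_comp_le_range _ _

theorem ContinuousLinearMap.isClosed_range_add_range {R M : Type*} [Ring R] [TopologicalSpace M]
    [AddCommGroup M] [Module R M] [IsTopologicalAddGroup M] [T1Space M] {p q : M →L[R] M}
    (hpq : Commute p q) (hp : IsIdempotentElem p) (hq : IsIdempotentElem q) :
    IsClosed ((LinearMap.range (p : M →ₗ[R] M) : Set M) +
      (LinearMap.range (q : M →ₗ[R] M) : Set M)) := by
  have hpq' : Commute (p : M →ₗ[R] M) q := hpq.map toLinearMapRingHom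
  rw [← Submodule.coe_sup, ← LinearMap.range_add_sub_mul_of_commute hpq'
    (IsIdempotentElem.toLinearMap hp) (IsIdempotentElem.toLinearMap hq), ← toLinearMap_mul,
    ← toLinearMap_add, ← toLinearMap_sub]
  exact IsIdempotentElem.isClosed_range (IsIdempotentElem.add_sub_mul_of_commute hpq hp hq)

section

variable {E : Type*} [NormedAddCommGroup E] [InnerProductSpace ℂ E] {L : Set (E →L[ℂ] E)}

theorem mem_algL_iff {T : E →L[ℂ] E} : T ∈ AlgL L ↔ ∀ P ∈ L, P * T * P = T * P := by
  simp only [AlgL, Set.mem_ofPred_eq, ← ContinuousLinearMap.mul_def, sub_mul, one_mul,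
    sub_eq_zero, mul_assoc, eq_comm]

theorem one_mem_algL (hL : ∀ P ∈ L, IsIdempotentElem P) : (1 : E →L[ℂ] E) ∈ AlgL L :=
  mem_algL_iff.2 fun P hP => by rw [mul_one, one_mul, (hL P hP).eq]

theorem mem_algL_of_mem (hL : ∀ P ∈ L, IsIdempotentElem P)
    (hcomm : ∀ P ∈ L, ∀ Q ∈ L, Commute P Q) {P : E →L[ℂ] E} (hP : P ∈ L) : P ∈ AlgL L :=
  mem_algL_iff.2 fun Q hQ => by rw [(hcomm Q hQ P hP).eq, mul_assoc, (hL Q hQ).eq]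

theorem mul_mem_algL {S T : E →L[ℂ] E} (hS : S ∈ AlgL L) (hT : T ∈ AlgL L) : S * T ∈ AlgL L :=
  mem_algL_iff.2 fun P hP => by
    have hS := mem_algL_iff.1 hS P hP
    have hT := mem_algL_iff.1 hT P hP
    calc P * (S * T) * P = P * S * (P * T * P) := by rw [hT]; simp only [mul_assoc]
      _ = P * S * P * T * P := by simp only [mul_assoc]
      _ = S * (P * T * P) := by rw [hS]; simp only [mul_assoc]
      _ = S * T * P := by rw [hT, mul_assoc]

theorem add_mem_algL {S T : E →L[ℂ] E} (hS : S ∈ AlgL L) (hT : T ∈ AlgL L) : S + T ∈ AlgL L :=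
  mem_algL_iff.2 fun P hP => by
    rw [mul_add, add_mul, add_mul, mem_algL_iff.1 hS P hP, mem_algL_iff.1 hT P hP]

theorem sub_mem_algL {S T : E →L[ℂ] E} (hS : S ∈ AlgL L) (hT : T ∈ AlgL L) : S - T ∈ AlgL L :=
  mem_algL_iff.2 fun P hP => by
    rw [mul_sub, sub_mul, sub_mul, mem_algL_iff.1 hS P hP, mem_algL_iff.1 hT P hP]

theorem mem_orbit_self (hL : ∀ P ∈ L, IsIdempotentElem P) (x : E) : x ∈ orbit L x :=
  ⟨1, one_mem_algL hL, rfl⟩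

theorem orbit_subset_orbit_of_mem {x y : E} (hy : y ∈ orbit L x) : orbit L y ⊆ orbit L x := by
  rintro _ ⟨T, hT, rfl⟩
  obtain ⟨S, hS, rfl⟩ := hy
  exact ⟨T * S, mul_mem_algL hT hS, rfl⟩

theorem add_mem_orbit {x a b : E} (ha : a ∈ orbit L x) (hb : b ∈ orbit L x) :
    a + b ∈ orbit L x := by
  obtain ⟨S, hS, rfl⟩ := ha
  obtain ⟨T, hT, rfl⟩ := hb
  exact ⟨S + T, add_mem_algL hS hT, rfl⟩

theorem orbit_add_subset (x y : E) : orbit L (x + y) ⊆ orbit L x + orbit L y := by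
  rintro _ ⟨T, hT, rfl⟩
  rw [map_add]
  exact Set.add_mem_add ⟨T, hT, rfl⟩ ⟨T, hT, rfl⟩

theorem orbit_add_one_sub_apply (hL : ∀ P ∈ L, IsIdempotentElem P)
    (hcomm : ∀ P ∈ L, ∀ Q ∈ L, Commute P Q) {P : E →L[ℂ] E} (hP : P ∈ L) {x₁ x₂ : E}
    (hran : (LinearMap.range (P : E →ₗ[ℂ] E) : Set E) = orbit L x₁) :
    orbit L (x₁ + (1 - P) x₂) = orbit L x₁ + orbit L x₂ := by
  set x := x₁ + (1 - P) x₂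
  have hPA : P ∈ AlgL L := mem_algL_of_mem hL hcomm hP
  have hQA : 1 - P ∈ AlgL L := sub_mem_algL (one_mem_algL hL) hPA
  have hPP : ∀ y, P (P y) = P y := fun y => by
    change (P * P) y = P y
    rw [(hL P hP).eq]
  have hfix : ∀ y, y ∈ orbit L x₁ ↔ P y = y := fun y => by
    rw [← hran, SetLike.mem_coe, LinearMap.IsIdempotentElem.mem_range_iff
      (ContinuousLinearMap.IsIdempotentElem.toLinearMap (hL P hP))]
    rfl
  have hPx₁ : P x₁ = x₁ := (hfix x₁).1 (mem_orbit_self hL x₁)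
  have hPx : P x = x₁ := by
    simp only [x, map_add, sub_apply, one_apply_eq_self, map_sub, hPP, hPx₁, sub_self, add_zero]
  have hQx : (1 - P) x = (1 - P) x₂ := by
    rw [sub_apply, hPx]
    simp only [x, sub_apply, one_apply_eq_self]
    abel
  have hx₁ : x₁ ∈ orbit L x := hPx ▸ ⟨P, hPA, rfl⟩
  have hx₂ : x₂ ∈ orbit L x := by
    have hPx₂ : P x₂ ∈ orbit L x := orbit_subset_orbit_of_mem hx₁ ((hfix _).2 (hPP x₂))
    have hQx₂ : (1 - P) x₂ ∈ orbit L x := hQx ▸ ⟨1 - P, hQA, rfl⟩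
    simpa using add_mem_orbit hPx₂ hQx₂
  refine subset_antisymm ?_ ?_
  · exact (orbit_add_subset _ _).trans
      (Set.add_subset_add_left (orbit_subset_orbit_of_mem ⟨1 - P, hQA, rfl⟩))
  · rintro _ ⟨a, ha, b, hb, rfl⟩
    exact add_mem_orbit (orbit_subset_orbit_of_mem hx₁ ha) (orbit_subset_orbit_of_mem hx₂ hb)

end

theorem stmt11_general (L : Set (H →L[ℂ] H)) (hL : IsCSL L) (x₁ x₂ : H)
    (P₁ P₂ : H →L[ℂ] H) (hP₁L : P₁ ∈ L) (hP₂L : P₂ ∈ L)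
    (hP₁ : (LinearMap.range (P₁ : H →ₗ[ℂ] H) : Set H) = orbit L x₁)
    (hP₂ : (LinearMap.range (P₂ : H →ₗ[ℂ] H) : Set H) = orbit L x₂) :
    orbit L (x₁ + (1 - P₁) x₂) =
      {z : H | ∃ a ∈ orbit L x₁, ∃ b ∈ orbit L x₂, z = a + b} ∧
    IsClosed {z : H | ∃ a ∈ orbit L x₁, ∃ b ∈ orbit L x₂, z = a + b} := by
  have hidem : ∀ P ∈ L, IsIdempotentElem P := fun P hP => (hL.1 P hP).2
  have hcomm : ∀ P ∈ L, ∀ Q ∈ L, Commute P Q := hL.2.1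
  have hsum : {z : H | ∃ a ∈ orbit L x₁, ∃ b ∈ orbit L x₂, z = a + b} =
      orbit L x₁ + orbit L x₂ := by
    ext z
    simp only [Set.mem_ofPred_eq, Set.mem_add, eq_comm]
  rw [hsum, orbit_add_one_sub_apply hidem hcomm hP₁L hP₁, ← hP₁, ← hP₂]
  exact ⟨rfl, ContinuousLinearMap.isClosed_range_add_range (hcomm P₁ hP₁L P₂ hP₂L)
    (hidem P₁ hP₁L) (hidem P₂ hP₂L)⟩

/-- if `x₁, x₂` are closed vectors for `Alg L`, with `P₁, P₂ ∈ L` the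
projections onto their orbits, then the orbit of `x = x₁ + (1-P₁)x₂` equals the closed span
of the two orbits (which is itself the singly generated orbit of `x`). -/
theorem stmt11 (L : Set (H →L[ℂ] H)) (hL : IsCSL L) (x₁ x₂ : H)
    (h₁ : IsClosed (orbit L x₁)) (h₂ : IsClosed (orbit L x₂))
    (P₁ P₂ : H →L[ℂ] H) (hP₁L : P₁ ∈ L) (hP₂L : P₂ ∈ L)
    (hP₁ : (LinearMap.range (P₁ : H →ₗ[ℂ] H) : Set H) = orbit L x₁)
    (hP₂ : (LinearMap.range (P₂ : H →ₗ[ℂ] H) : Set H) = orbit L x₂) :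
    orbit L (x₁ + (1 - P₁) x₂) =
      {z : H | ∃ a ∈ orbit L x₁, ∃ b ∈ orbit L x₂, z = a + b} ∧
    IsClosed {z : H | ∃ a ∈ orbit L x₁, ∃ b ∈ orbit L x₂, z = a + b} :=
  stmt11_general L hL x₁ x₂ P₁ P₂ hP₁L hP₂L hP₁ hP₂
end
end

section
/- Let H = ℓ²(−ℕ) with orthonormal basis (eₙ)ₙ≤−1 and let Pₙ be the projection onto the closed span of {eₖ : k < n}. Let T be the algebra of bounded operators leaving every Pₙ invariant (the nest algebra of {0,I} ∪ {Pₙ}). Then for every x ∈ H with ⟨x, e₋₁⟩ = 1 there exists an invertible operator X ∈ T with X⁻¹ ∈ T and X e₋₁ = x. -/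
noncomputable section

/-! We model `H = ℓ²(-ℕ)` as `lp (fun _ : ℕ => ℂ) 2`, where the index `m : ℕ` corresponds
to the integer `-(m+1)`; thus `eVec 0` is the basis vector `e₋₁`, and the nest projection
`Pₙ` (`n = -(m+1) ∈ -ℕ`) has range `Vsub m`, the closed span of `{e_k : k < n}`, i.e. of
`{eVec j : j > m}`. -/

abbrev Hneg : Type := lp (fun _ : ℕ => ℂ) 2

/-- The orthonormal basis vector `eₙ` with `n = -(m+1)`. -/
def eVec (m : ℕ) : Hneg := lp.single 2 m 1

/-- The range of the nest projection `Pₙ`, `n = -(m+1)`: the closed span of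
`{e_k : k < n}`. -/
def Vsub (m : ℕ) : Submodule ℂ Hneg :=
  (Submodule.span ℂ {z : Hneg | ∃ j : ℕ, m < j ∧ z = eVec j}).topologicalClosure

/-- The nest algebra of the nest `{0, I} ∪ {Pₙ : n ∈ -ℕ}`: all bounded operators leaving
every `Pₙ` invariant. -/
def NestAlg : Set (Hneg →L[ℂ] Hneg) :=
  {T | ∀ m : ℕ, ∀ z ∈ Vsub m, T z ∈ Vsub m}

/-! In the order of the nest, `e₋₁` is the last basis vector, so the last column of an upper
triangular operator is arbitrary: `X = 1 + S` with `S z = ⟪e₋₁, z⟫ (x - e₋₁)` works. The operator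
`S` kills the range of every nest projection (these are all orthogonal to `e₋₁`), so `1 ± S` lie
in the nest algebra, and `S² = 0` because `x - e₋₁ ⊥ e₋₁`, so `1 - S` is the inverse of `1 + S`. -/

open scoped InnerProductSpace

theorem one_add_one_sub_inverse_of_mul_self_eq_zero {R : Type*} [Ring R] {N : R} (hN : N * N = 0) :
    (1 + N) * (1 - N) = 1 ∧ (1 - N) * (1 + N) = 1 := by
  constructor
  · calc (1 + N) * (1 - N) = 1 - N * N := by noncomm_ring
      _ = 1 := by rw [hN, sub_zero]
  · calc (1 - N) * (1 + N) = 1 - N * N := by noncomm_ring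
      _ = 1 := by rw [hN, sub_zero]

theorem ContinuousLinearMap.smulRight_mul_self_eq_zero {R M : Type*} [Semiring R]
    [TopologicalSpace R] [TopologicalSpace M] [AddCommMonoid M] [Module R M] [ContinuousSMul R M]
    {f : M →L[R] R} {v : M} (hfv : f v = 0) :
    f.smulRight v * f.smulRight v = 0 := by
  ext z
  simp [hfv]

theorem inner_eVec_left (k : ℕ) (z : Hneg) : ⟪eVec k, z⟫_ℂ = (z : ∀ _ : ℕ, ℂ) k := by
  simp [eVec, lp.inner_single_left]

theorem norm_eVec (k : ℕ) : ‖eVec k‖ = 1 := by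
  simp [eVec, lp.norm_single]

theorem inner_eVec_eq_zero_of_mem_Vsub {k m : ℕ} (hkm : k ≤ m) {z : Hneg} (hz : z ∈ Vsub m) :
    ⟪eVec k, z⟫_ℂ = 0 := by
  suffices Vsub m ≤ LinearMap.ker (innerSL ℂ (eVec k) : Hneg →ₗ[ℂ] ℂ) from this hz
  refine Submodule.topologicalClosure_minimal _ ?_ (innerSL ℂ (eVec k)).isClosed_ker
  rw [Submodule.span_le]
  rintro _ ⟨j, hmj, rfl⟩
  have hkj : k ≠ j := by omega
  simp only [SetLike.mem_coe, LinearMap.mem_ker, ContinuousLinearMap.coe_coe, innerSL_apply_apply,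
    inner_eVec_left]
  simp [eVec, hkj]

theorem one_add_mem_NestAlg {S : Hneg →L[ℂ] Hneg} (hS : ∀ m, ∀ z ∈ Vsub m, S z = 0) :
    1 + S ∈ NestAlg := by
  intro m z hz
  simpa [hS m z hz] using hz

/-- for every `x ∈ ℓ²(-ℕ)` with `⟨x, e₋₁⟩ = 1` there is an invertible
operator `X` in the nest algebra, with inverse also in the nest algebra, such that
`X e₋₁ = x`. -/
theorem stmt17 (x : Hneg) (hx : (x : ∀ _ : ℕ, ℂ) 0 = 1) :
    ∃ X : Hneg →L[ℂ] Hneg, X ∈ NestAlg ∧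
      (∃ Y ∈ NestAlg, X * Y = 1 ∧ Y * X = 1) ∧ X (eVec 0) = x := by
  set S : Hneg →L[ℂ] Hneg := (innerSL ℂ (eVec 0)).smulRight (x - eVec 0)
  have hS : ∀ m, ∀ z ∈ Vsub m, S z = 0 := fun m z hz => by
    simp [S, inner_eVec_eq_zero_of_mem_Vsub (Nat.zero_le m) hz]
  have hSS : S * S = 0 := ContinuousLinearMap.smulRight_mul_self_eq_zero <| by
    simp [inner_sub_right, inner_eVec_left 0 x, hx, norm_eVec]
  refine ⟨1 + S, one_add_mem_NestAlg hS, ⟨1 - S, ?_, one_add_one_sub_inverse_of_mul_self_eq_zero hSS⟩, ?_⟩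
  · rw [sub_eq_add_neg]
    exact one_add_mem_NestAlg fun m z hz => by simp [hS m z hz]
  · simp [S, norm_eVec]
end
end

section
/- Let H = ℓ²(−ℕ) with basis (eₙ)ₙ≤−1, Pₙ the projection onto span{eₖ : k < n}, and T the corresponding nest algebra. Then every linear manifold M ⊆ H invariant under T is closed; moreover M is either 0, all of H, or equal to PₙH for some n, and M is singly generated: M = {Ax : A ∈ T} for some x ∈ H. -/
noncomputable section

/-! A nonzero invariant manifold `M` has a first coordinate `n` at which some `w ∈ M` is
nonzero. The rank-one operators `z ↦ z n • y` with `y` vanishing below `n` lie in the nest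
algebra, and applied to `(w n)⁻¹ • w` they produce every such `y`; so `M` is exactly the
space of vectors vanishing below `n`, which is closed, is `H` or some `PₘH`, and is the orbit
of `eVec n`. -/

def coord (k : ℕ) : Hneg →L[ℂ] ℂ := lp.evalCLM ℂ (fun _ : ℕ => ℂ) 2 k

@[simp] lemma coord_apply (k : ℕ) (z : Hneg) : coord k z = z k := rfl

lemma eVec_apply_self (n : ℕ) : eVec n n = 1 := lp.single_apply_self 2 n _

lemma eVec_apply_of_ne {k n : ℕ} (h : k ≠ n) : eVec n k = 0 := lp.single_apply_ne 2 n _ h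

def vanishingBelow (n : ℕ) : Submodule ℂ Hneg := ⨅ k < n, LinearMap.ker (coord k : Hneg →ₗ[ℂ] ℂ)

lemma mem_vanishingBelow {n : ℕ} {y : Hneg} : y ∈ vanishingBelow n ↔ ∀ k < n, y k = 0 := by
  simp [vanishingBelow, Submodule.mem_iInf]

lemma isClosed_vanishingBelow (n : ℕ) : IsClosed (vanishingBelow n : Set Hneg) := by
  simp only [vanishingBelow, Submodule.coe_iInf]
  exact isClosed_iInter fun k => isClosed_iInter fun _ => (coord k).isClosed_ker

lemma vanishingBelow_zero : vanishingBelow 0 = ⊤ := by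
  simp [vanishingBelow]

lemma vanishingBelow_antitone : Antitone vanishingBelow := fun _ _ hmn _ hy =>
  mem_vanishingBelow.2 fun k hk => mem_vanishingBelow.1 hy k (hk.trans_le hmn)

lemma eVec_mem_vanishingBelow (n : ℕ) : eVec n ∈ vanishingBelow n :=
  mem_vanishingBelow.2 fun _ hk => eVec_apply_of_ne hk.ne

lemma Vsub_eq_vanishingBelow (m : ℕ) : Vsub m = vanishingBelow (m + 1) := by
  apply le_antisymm
  · refine Submodule.topologicalClosure_minimal _ ?_ (isClosed_vanishingBelow _)
    rw [Submodule.span_le]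
    rintro _ ⟨j, hj, rfl⟩
    exact vanishingBelow_antitone (Nat.succ_le_of_lt hj) (eVec_mem_vanishingBelow j)
  · intro y hy
    have hterm : ∀ i, lp.single 2 i (y i) ∈ Vsub m := fun i => by
      rcases le_or_gt i m with hi | hi
      · simp [mem_vanishingBelow.1 hy i (Nat.lt_succ_of_le hi)]
      · rw [← mul_one (y i), ← smul_eq_mul, lp.single_smul]
        exact Submodule.smul_mem _ _ (Submodule.le_topologicalClosure _
          (Submodule.subset_span ⟨i, hi, rfl⟩))
    exact (Submodule.isClosed_topologicalClosure _).mem_of_tendsto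
      (lp.hasSum_single ENNReal.ofNat_ne_top y)
      (Filter.Eventually.of_forall fun s => Submodule.sum_mem _ fun i _ => hterm i)

lemma apply_mem_vanishingBelow_of_mem_nestAlg {T : Hneg →L[ℂ] Hneg} (hT : T ∈ NestAlg) (n : ℕ)
    {y : Hneg} (hy : y ∈ vanishingBelow n) : T y ∈ vanishingBelow n := by
  cases n with
  | zero => simp [vanishingBelow_zero]
  | succ m =>
    rw [← Vsub_eq_vanishingBelow] at hy ⊢
    exact hT m y hy

lemma zero_mem_nestAlg : (0 : Hneg →L[ℂ] Hneg) ∈ NestAlg := fun m _ _ => zero_mem (Vsub m)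

lemma smulRight_coord_mem_nestAlg {n : ℕ} {y : Hneg} (hy : y ∈ vanishingBelow n) :
    (coord n).smulRight y ∈ NestAlg := by
  intro m z hz
  rw [Vsub_eq_vanishingBelow] at hz ⊢
  rcases le_or_gt n m with hnm | hmn
  · simp [mem_vanishingBelow.1 hz n (Nat.lt_succ_of_le hnm)]
  · exact Submodule.smul_mem _ _ (vanishingBelow_antitone hmn hy)

lemma orbit_eVec (n : ℕ) :
    {y : Hneg | ∃ T ∈ NestAlg, T (eVec n) = y} = vanishingBelow n := by
  ext y
  constructor
  · rintro ⟨T, hT, rfl⟩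
    exact apply_mem_vanishingBelow_of_mem_nestAlg hT n (eVec_mem_vanishingBelow n)
  · intro hy
    exact ⟨_, smulRight_coord_mem_nestAlg hy, by simp [eVec_apply_self]⟩

lemma eq_vanishingBelow_of_invariant {M : Submodule ℂ Hneg}
    (hM : ∀ T ∈ NestAlg, ∀ z ∈ M, T z ∈ M) (hM₀ : M ≠ ⊥) : ∃ n, M = vanishingBelow n := by
  classical
  have hex : ∃ n, ∃ w ∈ M, w n ≠ 0 := by
    obtain ⟨w, hwM, hw₀⟩ := Submodule.exists_mem_ne_zero_of_ne_bot hM₀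
    by_contra! h
    exact hw₀ (lp.ext (funext fun n => h n w hwM))
  obtain ⟨w, hwM, hwn⟩ := Nat.find_spec hex
  refine ⟨Nat.find hex, le_antisymm (fun z hz => ?_) (fun y hy => ?_)⟩
  · exact mem_vanishingBelow.2 fun k hk => not_not.1 fun hzk => Nat.find_min hex hk ⟨z, hz, hzk⟩
  · have := hM _ (smulRight_coord_mem_nestAlg hy) _ (M.smul_mem (w (Nat.find hex))⁻¹ hwM)
    rwa [ContinuousLinearMap.smulRight_apply, coord_apply, lp.coeFn_smul, Pi.smul_apply,
      smul_eq_mul, inv_mul_cancel₀ hwn, one_smul] at this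

/-- every linear manifold of `ℓ²(-ℕ)` invariant under the nest algebra of the
order type `-ℕ` nest is closed, is `0`, all of `H`, or `PₙH` for some `n`, and is singly
generated. -/
theorem stmt18 (M : Submodule ℂ Hneg)
    (hM : ∀ T ∈ NestAlg, ∀ z ∈ M, T z ∈ M) :
    IsClosed (M : Set Hneg) ∧
    (M = ⊥ ∨ M = ⊤ ∨ ∃ m : ℕ, M = Vsub m) ∧
    ∃ x : Hneg, (M : Set Hneg) = {y : Hneg | ∃ T ∈ NestAlg, T x = y} := by
  rcases eq_or_ne M ⊥ with rfl | hM₀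
  · refine ⟨by simp, .inl rfl, 0, ?_⟩
    ext y
    simpa [eq_comm] using fun _ => ⟨0, zero_mem_nestAlg⟩
  obtain ⟨n, rfl⟩ := eq_vanishingBelow_of_invariant hM hM₀
  refine ⟨isClosed_vanishingBelow n, ?_, eVec n, (orbit_eVec n).symm⟩
  cases n with
  | zero => exact .inr (.inl vanishingBelow_zero)
  | succ m => exact .inr (.inr ⟨m, (Vsub_eq_vanishingBelow m).symm⟩)
end
end

section
/- Let M be a von Neumann algebra on a Hilbert space H whose commutant M' is abelian and finite dimensional. Then every M-invariant linear manifold in H is closed. -/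
/-! Being commutative, finite dimensional and closed under adjoints, `M'` is a reduced
finite-dimensional commutative `ℂ`-algebra (a normal nilpotent operator vanishes by the
C⋆-identity), hence `M' ≅ ℂⁿ`: there are idempotents `p₁, …, pₙ ∈ M'` with `∑ pᵢ = 1` on each of
which `M'` acts by scalars. Then `pᵢ T pᵢ` commutes with `M'` for every bounded `T`, so it lies in
`M'' = M`. If an invariant manifold `W` contains `y` with `pᵢ y ≠ 0`, the rank-one operators
`pᵢ ⟪pᵢ y, ·⟫ x pᵢ` put all of `pᵢ H` into `W`; otherwise `pᵢ` kills `W`. So `W` is the fixed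
space of the bounded operator `∑_{pᵢ H ⊆ W} pᵢ`, hence closed. -/

universe u

section CStarRing

variable {E : Type*} [NormedRing E] [StarRing E] [CStarRing E]

theorem IsSelfAdjoint.eq_zero_of_isNilpotent {x : E} (hx : IsSelfAdjoint x)
    (hnil : IsNilpotent x) : x = 0 := by
  obtain ⟨n, hn⟩ := hnil
  have hpow : x ^ 2 ^ n = 0 := pow_eq_zero_of_le Nat.lt_two_pow_self.le hn
  have hnorm := hx.nnnorm_pow_two_pow n
  rw [hpow, nnnorm_zero, eq_comm, pow_eq_zero_iff (by positivity)] at hnorm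
  exact nnnorm_eq_zero.mp hnorm

theorem IsStarNormal.eq_zero_of_isNilpotent {x : E} [IsStarNormal x] (hnil : IsNilpotent x) :
    x = 0 :=
  (CStarRing.star_mul_self_eq_zero_iff x).mp <|
    (IsSelfAdjoint.star_mul_self x).eq_zero_of_isNilpotent
      (star_comm_self.isNilpotent_mul_left hnil)

end CStarRing

theorem IsReduced.exists_completeOrthogonalIdempotents_mul_eq_smul (K : Type*) (R : Type u)
    [Field K] [IsAlgClosed K] [CommRing R] [Algebra K R] [FiniteDimensional K R] [IsReduced R] :
    ∃ (ι : Type u) (_ : Fintype ι) (e : ι → R),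
      CompleteOrthogonalIdempotents e ∧ ∀ i a, ∃ c : K, a * e i = c • e i := by
  have : IsArtinianRing R := IsArtinianRing.of_finite K R
  have : Fintype (MaximalSpectrum R) := Fintype.ofFinite _
  classical
  let ψ := IsArtinianRing.equivPi R
  refine ⟨MaximalSpectrum R, inferInstance, ψ.symm.toRingHom ∘ fun I => Pi.single I 1,
    (CompleteOrthogonalIdempotents.single _).map _, fun I a => ?_⟩
  have : I.asIdeal.IsMaximal := I.isMaximal
  let _ := Ideal.Quotient.field I.asIdeal
  have : FiniteDimensional K (R ⧸ I.asIdeal) :=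
    Module.Finite.of_surjective (Ideal.Quotient.mkₐ K I.asIdeal).toLinearMap
      Ideal.Quotient.mk_surjective
  obtain ⟨c, hc⟩ :=
    (IsAlgClosed.algebraMap_bijective_of_isIntegral (k := K)).2 (Ideal.Quotient.mk I.asIdeal a)
  refine ⟨c, ψ.injective ?_⟩
  ext J
  change ψ (a * ψ.symm (Pi.single I 1)) J = ψ (c • ψ.symm (Pi.single I 1)) J
  rw [Algebra.smul_def, map_mul, map_mul, ψ.apply_symm_apply]
  rcases eq_or_ne J I with rfl | hJI
  · simp only [Pi.mul_apply, Pi.single_eq_same, mul_one, ψ, IsArtinianRing.equivPi_apply]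
    rw [← hc, IsScalarTower.algebraMap_apply K R, Ideal.Quotient.algebraMap_eq]
  · simp [hJI]

theorem StarSubalgebra.exists_sum_eq_one_mul_eq_smul {A : Type u} [NormedRing A] [StarRing A]
    [CStarRing A] [Algebra ℂ A] [StarModule ℂ A] (S : StarSubalgebra ℂ A)
    (hS : ∀ a ∈ S, ∀ b ∈ S, a * b = b * a) [FiniteDimensional ℂ S] :
    ∃ (ι : Type u) (_ : Fintype ι) (e : ι → A),
      (∀ i, e i ∈ S) ∧ ∑ i, e i = 1 ∧ ∀ i, ∀ a ∈ S, ∃ c : ℂ, a * e i = c • e i := by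
  let _ : CommRing S := { S.toRing with mul_comm := fun a b => Subtype.ext (hS a a.2 b b.2) }
  have : IsReduced S := ⟨fun a ha => by
    have : IsStarNormal (a : A) := ⟨hS _ (star_mem a.2) _ a.2⟩
    exact Subtype.ext (IsStarNormal.eq_zero_of_isNilpotent (ha.map S.subtype))⟩
  obtain ⟨ι, _, e, he, hsmul⟩ := IsReduced.exists_completeOrthogonalIdempotents_mul_eq_smul ℂ S
  refine ⟨ι, inferInstance, fun i => e i, fun i => (e i).2, ?_, fun i a ha => ?_⟩
  · simpa using congr_arg Subtype.val he.complete
  · obtain ⟨c, hc⟩ := hsmul i ⟨a, ha⟩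
    exact ⟨c, congr_arg Subtype.val hc⟩

theorem VonNeumannAlgebra.mul_mul_mem_of_mul_eq_smul {H : Type*} [NormedAddCommGroup H]
    [InnerProductSpace ℂ H] [CompleteSpace H] (M : VonNeumannAlgebra H)
    {p : H →L[ℂ] H} (hp : ∀ g ∈ M.commutant, ∃ c : ℂ, g * p = c • p ∧ p * g = c • p)
    (T : H →L[ℂ] H) : p * T * p ∈ M := by
  rw [← M.commutant_commutant]
  refine VonNeumannAlgebra.mem_commutant_iff.mpr fun g hg => ?_
  obtain ⟨c, hgp, hpg⟩ := hp g hg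
  calc g * (p * T * p) = (g * p) * T * p := by simp only [mul_assoc]
    _ = c • (p * T * p) := by rw [hgp, smul_mul_assoc, smul_mul_assoc]
    _ = p * T * (p * g) := by rw [hpg, mul_smul_comm]
    _ = (p * T * p) * g := by simp only [mul_assoc]

theorem Submodule.apply_mem_of_mul_mul_apply_mem {𝕜 E : Type*} [RCLike 𝕜] [NormedAddCommGroup E]
    [InnerProductSpace 𝕜 E] {W : Submodule 𝕜 E} {p : E →L[𝕜] E}
    (hW : ∀ T : E →L[𝕜] E, ∀ y ∈ W, (p * T * p) y ∈ W) {y : E} (hy : y ∈ W) (hpy : p y ≠ 0)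
    (x : E) : p x ∈ W := by
  have hrank_one : (p * (innerSL 𝕜 (p y)).smulRight x * p) y = (inner 𝕜 (p y) (p y)) • p x := by
    simp
  rw [← W.smul_mem_iff (inner_self_ne_zero (𝕜 := 𝕜).mpr hpy), ← hrank_one]
  exact hW _ y hy

theorem Submodule.isClosed_of_sum_eq_one {R E ι : Type*} [Ring R] [AddCommGroup E] [Module R E]
    [TopologicalSpace E] [ContinuousAdd E] [T2Space E] [Fintype ι] {p : ι → E →L[R] E}
    (hsum : ∑ i, p i = 1) {W : Submodule R E} (hW : ∀ i, (∀ x, p i x ∈ W) ∨ ∀ y ∈ W, p i y = 0) :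
    IsClosed (W : Set E) := by
  classical
  let P := ∑ i ∈ Finset.univ.filter (fun i => ∀ x, p i x ∈ W), p i
  suffices (W : Set E) = {x | P x = x} from this ▸ isClosed_eq P.continuous continuous_id
  ext x
  simp only [SetLike.mem_coe, Set.mem_ofPred_eq, P, sum_apply]
  constructor
  · intro hx
    calc ∑ i ∈ Finset.univ.filter (fun i => ∀ x, p i x ∈ W), p i x = ∑ i, p i x :=
          Finset.sum_subset (Finset.subset_univ _) fun i _ hi =>
            (hW i).resolve_left (by simpa using hi) x hx
      _ = x := by rw [← sum_apply, hsum, one_apply_eq_self]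
  · intro hx
    rw [← hx]
    exact W.sum_mem fun i hi => (Finset.mem_filter.mp hi).2 x

/-- if `M` is a von Neumann algebra on `H` whose commutant is abelian and
finite dimensional, then every `M`-invariant linear manifold in `H` is closed. -/
theorem stmt19 {H : Type*} [NormedAddCommGroup H] [InnerProductSpace ℂ H] [CompleteSpace H]
    (M : VonNeumannAlgebra H)
    (habelian : ∀ S ∈ M.commutant, ∀ T ∈ M.commutant, S * T = T * S)
    (hfd : FiniteDimensional ℂ M.commutant.toSubalgebra) :
    ∀ W : Submodule ℂ H, (∀ T ∈ M, ∀ x ∈ W, T x ∈ W) → IsClosed (W : Set H) := by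
  intro W hW
  obtain ⟨ι, _, p, hp, hsum, hscalar⟩ :=
    M.commutant.toStarSubalgebra.exists_sum_eq_one_mul_eq_smul habelian
  refine W.isClosed_of_sum_eq_one hsum fun i => ?_
  have hblock : ∀ T, p i * T * p i ∈ M := M.mul_mul_mem_of_mul_eq_smul fun g hg => by
    obtain ⟨c, hc⟩ := hscalar i g hg
    exact ⟨c, hc, habelian _ (hp i) g hg ▸ hc⟩
  by_cases hmeets : ∃ y ∈ W, p i y ≠ 0
  · obtain ⟨y, hy, hpy⟩ := hmeets
    exact .inl (W.apply_mem_of_mul_mul_apply_mem (fun T => hW _ (hblock T)) hy hpy)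
  · push Not at hmeets
    exact .inr hmeets
end
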